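/- arXiv:0706.3425 — 2 statements merged into one kernel-verified Lean document; each statement's English description precedes it below -/
import Mathlib

section
/- The automorphism group of the Klein bottle group ℤ ⋊ ℤ (with nontrivial action) is isomorphic to (ℤ ⊕ ℤ/2) ⋊ ℤ/2, where the generator of the acting ℤ/2 sends (r, ε) to (-r, ε). -/
/-!
The Klein bottle group is modelled by the semidirect product `ℤ ⋊ ℤ`, in which every element is
uniquely `α ^ m * β ^ n`. Applying an endomorphism to `β α β⁻¹ = α⁻¹` and reading off the
`β`-exponent shows that `α` is sent into `⟨α⟩`; invertibility then forces `α ↦ α ^ ε` and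
`β ↦ α ^ r * β ^ δ` with `ε, δ = ±1`. Every such triple `(ε, r, δ)` defines an automorphism, and
composition reads `(ε, r, δ) ∘ (ε', r', δ') = (ε ε', r + ε r', δ δ')`: this is the multiplication of
`(ℤ ⊕ ℤ/2) ⋊ ℤ/2`, with `(r, δ)` in the normal factor and `ε` in the acting one.
-/

/-- The single relator of the Klein bottle group. -/
def kleinRels : Set (FreeGroup (Fin 2)) :=
  {FreeGroup.of 0 * FreeGroup.of 1 * FreeGroup.of 0 * (FreeGroup.of 1)⁻¹}

/-- The Klein bottle group `⟨a, b | a b a b⁻¹⟩`. -/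
abbrev KleinGroup := PresentedGroup kleinRels

/-- The generator `a` (also called `x` or `α`). -/
def ka : KleinGroup := PresentedGroup.of 0

/-- The generator `b` (also called `y` or `β`). -/
def kb : KleinGroup := PresentedGroup.of 1


/-- The automorphism `(r, ε) ↦ (-r, ε)` of `ℤ ⊕ ℤ/2`, written multiplicatively. -/
def negAut : MulAut (Multiplicative (ℤ × ZMod 2)) :=
  AddEquiv.toMultiplicative ((AddEquiv.neg ℤ).prodCongr (AddEquiv.refl (ZMod 2)))

lemma negAut_sq : (2 : ℤ) • Additive.ofMul negAut = 0 := by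
  show Additive.ofMul negAut + Additive.ofMul negAut = 0
  have : negAut * negAut = 1 := by
    ext x
    all_goals simp [negAut, AddEquiv.prodCongr, Equiv.prodCongr, AddEquiv.neg, Prod.map_map,
      Function.comp_def, MulAut.mul_apply]
    exact neg_neg _
  simpa using congrArg Additive.ofMul this

/-- The action of `ℤ/2` on `ℤ ⊕ ℤ/2` whose generator sends `(r, ε)` to `(-r, ε)`. -/
def kleinTheta : Multiplicative (ZMod 2) →* MulAut (Multiplicative (ℤ × ZMod 2)) :=
  AddMonoidHom.toMultiplicative
    (ZMod.lift 2 ⟨zmultiplesHom _ (Additive.ofMul negAut), by simpa using negAut_sq⟩)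

open Multiplicative SemidirectProduct

theorem MulAut.zpow_apply_of_apply_eq_inv {H : Type*} [Group H] {σ : MulAut H} {a : H}
    (h : σ a = a⁻¹) (n : ℤ) : (σ ^ n) a = a ^ (n.negOnePow : ℤ) := by
  have h_inv : σ⁻¹ a = a⁻¹ := by
    rw [MulAut.inv_apply, MulEquiv.symm_apply_eq, map_inv, h, inv_inv]
  induction n using Int.induction_on with
  | zero => simp
  | succ n ih =>
    rw [add_comm, zpow_add, zpow_one, MulAut.mul_apply, ih, map_zpow, h, Int.negOnePow_add]
    simp [zpow_neg]
  | pred n ih =>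
    rw [sub_eq_neg_add, zpow_add, zpow_neg_one, MulAut.mul_apply, ih, map_zpow, h_inv,
      Int.negOnePow_add]
    simp [zpow_neg]

theorem Int.negOnePow_units (u : ℤˣ) : (u : ℤ).negOnePow = -1 := by
  rcases Int.units_eq_one_or u with rfl | rfl <;> rfl

def signZModTwo : Multiplicative (ZMod 2) ≃* ℤˣ where
  toFun c := if toAdd c = 0 then 1 else -1
  invFun u := if u = 1 then 1 else ofAdd 1
  left_inv := by decide
  right_inv := by decide
  map_mul' := by decide

theorem kleinTheta_apply (c : Multiplicative (ZMod 2)) (n : Multiplicative (ℤ × ZMod 2)) :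
    kleinTheta c n = ofAdd ((signZModTwo c : ℤ) * (toAdd n).1, (toAdd n).2) := by
  obtain rfl | rfl : c = 1 ∨ c = ofAdd 1 := by decide +revert
  · simp [signZModTwo]
  · rw [show kleinTheta (ofAdd 1) = negAut from rfl]
    simp [signZModTwo, negAut]
    rfl

abbrev KleinAutGroup := Multiplicative (ℤ × ZMod 2) ⋊[kleinTheta] Multiplicative (ZMod 2)

theorem kb_mul_ka_mul_kb_inv : kb * ka * kb⁻¹ = ka⁻¹ := by
  have hrel : ka * kb * ka * kb⁻¹ = 1 := by
    simpa [ka, kb, PresentedGroup.of] using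
      PresentedGroup.one_of_mem (rels := kleinRels) (Set.mem_singleton _)
  exact eq_inv_of_mul_eq_one_right <| by simpa only [mul_assoc] using hrel

def kleinAction : Multiplicative ℤ →* MulAut (Multiplicative ℤ) :=
  zpowersHom _ (MulEquiv.inv _)

theorem kleinAction_apply (n m : Multiplicative ℤ) :
    kleinAction n m = m ^ ((toAdd n).negOnePow : ℤ) :=
  MulAut.zpow_apply_of_apply_eq_inv (σ := MulEquiv.inv (Multiplicative ℤ)) (a := m) rfl (toAdd n)

abbrev KleinSemidirect := Multiplicative ℤ ⋊[kleinAction] Multiplicative ℤ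

namespace KleinSemidirect

def α : KleinSemidirect := inl (ofAdd 1)
def β : KleinSemidirect := inr (ofAdd 1)

def x (g : KleinSemidirect) : ℤ := toAdd g.left
def y (g : KleinSemidirect) : ℤ := toAdd g.right

@[ext] theorem ext' {g h : KleinSemidirect} (hx : x g = x h) (hy : y g = y h) : g = h :=
  SemidirectProduct.ext (toAdd.injective hx) (toAdd.injective hy)

@[simp] theorem x_mul (g h : KleinSemidirect) : x (g * h) = x g + (y g).negOnePow * x h := by
  simp [x, y, mul_left, kleinAction_apply, mul_comm]

@[simp] theorem y_mul (g h : KleinSemidirect) : y (g * h) = y g + y h := rfl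

@[simp] theorem x_inv (g : KleinSemidirect) : x g⁻¹ = -((y g).negOnePow * x g) := by
  rw [x, inv_left, kleinAction_apply]
  simp [x, y, mul_comm]

@[simp] theorem y_inv (g : KleinSemidirect) : y g⁻¹ = -y g := rfl

@[simp] theorem y_zpow (g : KleinSemidirect) (n : ℤ) : y (g ^ n) = n * y g := by
  rw [y, ← rightHom_eq_right, map_zpow, toAdd_zpow, smul_eq_mul, rightHom_eq_right, y]

theorem α_zpow (m : ℤ) : α ^ m = inl (ofAdd m) := by
  rw [α, ← map_zpow, ← ofAdd_zsmul, smul_eq_mul, mul_one]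

theorem β_zpow (n : ℤ) : β ^ n = inr (ofAdd n) := by
  rw [β, ← map_zpow, ← ofAdd_zsmul, smul_eq_mul, mul_one]

@[simp] theorem x_α_zpow (m : ℤ) : x (α ^ m) = m := by rw [α_zpow]; rfl
@[simp] theorem y_α_zpow (m : ℤ) : y (α ^ m) = 0 := by rw [α_zpow]; rfl
@[simp] theorem x_β_zpow (n : ℤ) : x (β ^ n) = 0 := by rw [β_zpow]; rfl
@[simp] theorem y_β_zpow (n : ℤ) : y (β ^ n) = n := by rw [β_zpow]; rfl
@[simp] theorem x_one : x 1 = 0 := rfl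
@[simp] theorem y_one : y 1 = 0 := rfl
@[simp] theorem x_α : x α = 1 := rfl
@[simp] theorem y_α : y α = 0 := rfl
@[simp] theorem x_β : x β = 0 := rfl
@[simp] theorem y_β : y β = 1 := rfl

theorem α_zpow_mul_β_zpow (g : KleinSemidirect) : α ^ x g * β ^ y g = g := by
  ext <;> simp

theorem hom_ext {H : Type*} [Group H] {f f' : KleinSemidirect →* H}
    (hα : f α = f' α) (hβ : f β = f' β) : f = f' :=
  SemidirectProduct.hom_ext (MonoidHom.ext_mint hα) (MonoidHom.ext_mint hβ)

theorem β_mul_α_mul_β_inv : β * α * β⁻¹ = α⁻¹ := by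
  ext <;> simp

section lift

variable {H : Type*} [Group H] (a b : H) (h : b * a * b⁻¹ = a⁻¹)

def lift : KleinSemidirect →* H :=
  SemidirectProduct.lift (zpowersHom H a) (zpowersHom H b) fun n => MonoidHom.ext_mint <| by
    have hconj : MulAut.conj b a = a⁻¹ := h
    simp [kleinAction_apply, map_zpow, MulAut.zpow_apply_of_apply_eq_inv hconj]

@[simp] theorem lift_α : lift a b h α = a := by simp [lift, α]
@[simp] theorem lift_β : lift a b h β = b := by simp [lift, β]

end lift

def ofKleinGroup : KleinGroup →* KleinSemidirect :=
  PresentedGroup.toGroup (f := ![α, β]) <| by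
    rintro r rfl
    change α * β * α * β⁻¹ = 1
    ext <;> simp

def toKleinGroup : KleinSemidirect →* KleinGroup := lift ka kb kb_mul_ka_mul_kb_inv

def kleinGroupEquiv : KleinGroup ≃* KleinSemidirect :=
  ofKleinGroup.toMulEquiv toKleinGroup
    (PresentedGroup.ext fun i => by fin_cases i <;> rfl)
    (hom_ext rfl rfl)

def endo (ε : ℤˣ) (r : ℤ) (δ : ℤˣ) : KleinSemidirect →* KleinSemidirect :=
  lift (α ^ (ε : ℤ)) (α ^ r * β ^ (δ : ℤ)) <| by
    ext <;> simp [Int.negOnePow_units]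

@[simp] theorem endo_α (ε : ℤˣ) (r : ℤ) (δ : ℤˣ) : endo ε r δ α = α ^ (ε : ℤ) := lift_α ..
@[simp] theorem endo_β (ε : ℤˣ) (r : ℤ) (δ : ℤˣ) : endo ε r δ β = α ^ r * β ^ (δ : ℤ) :=
  lift_β ..

theorem endo_one_zero_one : endo 1 0 1 = MonoidHom.id _ :=
  hom_ext (by simp) (by simp)

theorem endo_comp_endo (ε : ℤˣ) (r : ℤ) (δ ε' : ℤˣ) (r' : ℤ) (δ' : ℤˣ) :
    (endo ε r δ).comp (endo ε' r' δ') = endo (ε * ε') (r + ε * r') (δ * δ') := by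
  refine hom_ext ?_ ?_
  · simp [← zpow_mul, mul_comm]
  · rcases Int.units_eq_one_or δ' with rfl | rfl <;> ext <;>
      simp [← zpow_mul, Int.negOnePow_units] <;> ring

section endomorphism

variable {F : Type*} [FunLike F KleinSemidirect KleinSemidirect]
  [MonoidHomClass F KleinSemidirect KleinSemidirect] (f : F)

theorem y_map_α : y (f α) = 0 := by
  have := congrArg (y ∘ f) β_mul_α_mul_β_inv
  simp only [Function.comp_apply, map_mul, map_inv, y_mul, y_inv] at this
  omega

theorem map_α_eq_α_zpow : f α = α ^ x (f α) := by
  conv_lhs => rw [← α_zpow_mul_β_zpow (f α), y_map_α, zpow_zero, mul_one]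

end endomorphism

theorem isUnit_x_map_α (u : MulAut KleinSemidirect) : IsUnit (x (u α)) := by
  have h : α = u (u⁻¹ α) := by simp
  rw [map_α_eq_α_zpow (u⁻¹), map_zpow, map_α_eq_α_zpow u, ← zpow_mul] at h
  exact IsUnit.of_mul_eq_one _ (by simpa using congrArg x h.symm)

theorem isUnit_y_map_β (u : MulAut KleinSemidirect) : IsUnit (y (u β)) := by
  have h : β = u (u⁻¹ β) := by simp
  rw [← α_zpow_mul_β_zpow (u⁻¹ β), map_mul, map_zpow, map_zpow] at h
  exact IsUnit.of_mul_eq_one (y (u⁻¹ β)) (by simpa [y_map_α, mul_comm] using congrArg y h.symm)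

def endoOf (p : KleinAutGroup) : KleinSemidirect →* KleinSemidirect :=
  endo (signZModTwo p.right) (toAdd p.left).1 (signZModTwo (ofAdd (toAdd p.left).2))

theorem endoOf_one : endoOf 1 = MonoidHom.id _ := by
  simpa [endoOf] using endo_one_zero_one

theorem endoOf_mul (p q : KleinAutGroup) : endoOf (p * q) = (endoOf p).comp (endoOf q) := by
  rw [endoOf, endoOf, endoOf, endo_comp_endo, ← map_mul, ← map_mul]
  simp [kleinTheta_apply]

def toMulAut (p : KleinAutGroup) : MulAut KleinSemidirect :=
  (endoOf p).toMulEquiv (endoOf p⁻¹)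
    (by rw [← endoOf_mul, inv_mul_cancel, endoOf_one])
    (by rw [← endoOf_mul, mul_inv_cancel, endoOf_one])

def toMulAutHom : KleinAutGroup →* MulAut KleinSemidirect where
  toFun := toMulAut
  map_one' := MulEquiv.ext fun g => by simp [toMulAut, endoOf_one]
  map_mul' p q := MulEquiv.ext fun g => by simp [toMulAut, endoOf_mul]

@[simp] theorem toMulAutHom_apply (p : KleinAutGroup) (g : KleinSemidirect) :
    toMulAutHom p g = endoOf p g := rfl

theorem toMulAutHom_injective : Function.Injective toMulAutHom := by
  intro p q h
  have hα := congrArg x (DFunLike.congr_fun h α)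
  have hβx := congrArg x (DFunLike.congr_fun h β)
  have hβy := congrArg y (DFunLike.congr_fun h β)
  simp only [toMulAutHom_apply, endoOf, endo_α, endo_β, x_α_zpow, x_mul, y_mul, x_β_zpow,
    y_α_zpow, y_β_zpow, mul_zero, add_zero, zero_add, Units.val_inj, EmbeddingLike.apply_eq_iff_eq,
    ofAdd.injective.eq_iff] at hα hβx hβy
  exact SemidirectProduct.ext (toAdd.injective (Prod.ext hβx hβy)) hα

theorem toMulAutHom_surjective : Function.Surjective toMulAutHom := by
  intro u
  let ε := (isUnit_x_map_α u).unit
  let δ := (isUnit_y_map_β u).unit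
  refine ⟨⟨ofAdd (x (u β), toAdd (signZModTwo.symm δ)), signZModTwo.symm ε⟩, ?_⟩
  refine MulEquiv.toMonoidHom_injective (hom_ext ?_ ?_)
  · change endoOf _ α = u α
    rw [map_α_eq_α_zpow u]
    simp [endoOf, ε]
  · simp [endoOf, δ, α_zpow_mul_β_zpow]

noncomputable def autEquiv : KleinAutGroup ≃* MulAut KleinSemidirect :=
  MulEquiv.ofBijective toMulAutHom ⟨toMulAutHom_injective, toMulAutHom_surjective⟩

end KleinSemidirect

/-- The automorphism group of the Klein bottle group is isomorphic to
`(ℤ ⊕ ℤ/2) ⋊ ℤ/2`, where the generator of the acting `ℤ/2` sends `(r, ε)`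
to `(-r, ε)`. -/
theorem stmt7 :
    Nonempty (MulAut KleinGroup ≃*
      Multiplicative (ℤ × ZMod 2) ⋊[kleinTheta] Multiplicative (ZMod 2)) :=
  ⟨(MulAut.congr KleinSemidirect.kleinGroupEquiv).trans KleinSemidirect.autEquiv.symm⟩
end

section
/- In the Klein bottle group with automorphism φ : x ↦ x, y ↦ x^r y^{-1}, the twisted conjugacy class of x^i consists exactly of the elements x^i y^{4n} and x^{-r-i} y^{4n+2} for n ∈ ℤ; consequently x^i and x^j are φ-twisted conjugate iff i = j, and R(φ) = ∞. -/
/-!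
Every element of the Klein bottle group is `x^m y^k`. Since `y²` commutes with `x` and
`φ(y²) = y⁻²`, twisting by `x^m y^{2n}` sends `x^a y^{2b}` to `x^a y^{2b+4n}`, while twisting
`x^i` by `y` gives `x^{-r-i} y²`; splitting `k` by parity yields the class of `x^i`. The
`y`-exponent is a homomorphism to `ℤ`, and `x` has infinite order (it maps to a translation of
the infinite dihedral group), so the classes of the `x^i` are pairwise distinct.
-/

/-- Two elements are `φ`-twisted conjugate if `b = σ * a * (φ σ)⁻¹` for some `σ`. -/
def twistedConj {G : Type*} [Group G] (φ : G →* G) (a b : G) : Prop :=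
  ∃ σ : G, b = σ * a * (φ σ)⁻¹


theorem mul_mul_map_mul_inv {G : Type*} [Group G] (φ : G →* G) (σ τ a : G) :
    σ * τ * a * (φ (σ * τ))⁻¹ = σ * (τ * a * (φ τ)⁻¹) * (φ σ)⁻¹ := by
  rw [map_mul]; group

theorem twistedConj_equivalence {G : Type*} [Group G] (φ : G →* G) :
    Equivalence (twistedConj φ) where
  refl a := ⟨1, by simp⟩
  symm := by
    rintro a b ⟨σ, rfl⟩
    exact ⟨σ⁻¹, by simp only [map_inv]; group⟩
  trans := by
    rintro a b c ⟨σ, rfl⟩ ⟨τ, rfl⟩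
    exact ⟨τ * σ, by simp only [map_mul]; group⟩

namespace KleinGroup

theorem semiconjBy_kb_ka : SemiconjBy kb ka ka⁻¹ := by
  have hrel : ka * kb * ka * kb⁻¹ = 1 :=
    (QuotientGroup.eq_one_iff _).2 (Subgroup.subset_normalClosure rfl)
  rw [mul_inv_eq_one] at hrel
  show kb * ka = ka⁻¹ * kb
  calc kb * ka = ka⁻¹ * (ka * kb * ka) := by group
    _ = ka⁻¹ * kb := by rw [hrel]

theorem kb_mul_ka_zpow (m : ℤ) : kb * ka ^ m = ka ^ (-m) * kb := by
  rw [zpow_neg, ← inv_zpow]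
  exact semiconjBy_kb_ka.zpow_right m

theorem kb_inv_mul_ka_zpow (m : ℤ) : kb⁻¹ * ka ^ m = ka ^ (-m) * kb⁻¹ := by
  calc kb⁻¹ * ka ^ m = kb⁻¹ * (ka ^ m * kb) * kb⁻¹ := by group
    _ = ka ^ (-m) * kb⁻¹ := by rw [← neg_neg m, ← kb_mul_ka_zpow, neg_neg]; group

theorem commute_kb_zpow_two_ka : Commute (kb ^ (2 : ℤ)) ka := by
  have hinv : SemiconjBy kb ka⁻¹ ka := by simpa using semiconjBy_kb_ka.inv_right
  rw [zpow_two]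
  exact hinv.mul_left semiconjBy_kb_ka

theorem commute_kb_zpow_two_mul_ka_zpow (n m : ℤ) : Commute (kb ^ (2 * n)) (ka ^ m) := by
  rw [zpow_mul]
  exact commute_kb_zpow_two_ka.zpow_zpow n m

theorem exists_eq_ka_zpow_mul_kb_zpow (g : KleinGroup) : ∃ m k : ℤ, g = ka ^ m * kb ^ k := by
  have hg : g ∈ Subgroup.closure (Set.range PresentedGroup.of) := by
    rw [PresentedGroup.closure_range_of]; trivial
  induction hg using Subgroup.closure_induction_left with
  | one => exact ⟨0, 0, by simp⟩
  | mul_left s hs g _ ih =>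
    obtain ⟨j, rfl⟩ := hs
    obtain ⟨m, k, rfl⟩ := ih
    fin_cases j
    · exact ⟨m + 1, k, by change ka * _ = _; group⟩
    · refine ⟨-m, k + 1, ?_⟩
      change kb * _ = _
      rw [← mul_assoc, kb_mul_ka_zpow]
      group
  | inv_mul_cancel s hs g _ ih =>
    obtain ⟨j, rfl⟩ := hs
    obtain ⟨m, k, rfl⟩ := ih
    fin_cases j
    · exact ⟨m - 1, k, by change ka⁻¹ * _ = _; group⟩
    · refine ⟨-m, k - 1, ?_⟩
      change kb⁻¹ * _ = _
      rw [← mul_assoc, kb_inv_mul_ka_zpow]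
      group

def kbDegree : KleinGroup →* Multiplicative ℤ :=
  PresentedGroup.toGroup (f := ![1, Multiplicative.ofAdd 1]) (by
    rintro _ rfl
    simp)

def toDihedral : KleinGroup →* DihedralGroup 0 :=
  PresentedGroup.toGroup (f := ![DihedralGroup.r 1, DihedralGroup.sr 0]) (by
    rintro _ rfl
    simp [DihedralGroup.r_mul_sr, DihedralGroup.sr_mul_r, DihedralGroup.sr_mul_sr])

theorem kbDegree_ka_zpow_mul_kb_zpow (m k : ℤ) :
    kbDegree (ka ^ m * kb ^ k) = Multiplicative.ofAdd k := by
  simp [kbDegree, ka, kb, ← ofAdd_zsmul]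

theorem ka_zpow_injective : Function.Injective (ka ^ · : ℤ → KleinGroup) := by
  intro m n h
  have h' := congrArg toDihedral h
  simpa [toDihedral, ka, DihedralGroup.r_one_zpow] using h'

section Twist

variable {r : ℤ} {φ : KleinGroup →* KleinGroup}

theorem map_kb_zpow_two_mul (hy : φ kb = ka ^ r * kb⁻¹) (n : ℤ) :
    φ (kb ^ (2 * n)) = kb ^ (-(2 * n)) := by
  have hsq : φ (kb ^ (2 : ℤ)) = kb ^ (-2 : ℤ) := by
    rw [map_zpow, hy, zpow_two, mul_assoc, ← mul_assoc kb⁻¹, kb_inv_mul_ka_zpow]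
    group
  rw [zpow_mul, map_zpow, hsq, ← zpow_mul, neg_mul]

theorem ka_zpow_mul_kb_zpow_two_mul_twist (hx : φ ka = ka) (hy : φ kb = ka ^ r * kb⁻¹)
    (m n a b : ℤ) :
    ka ^ m * kb ^ (2 * n) * (ka ^ a * kb ^ (2 * b)) * (φ (ka ^ m * kb ^ (2 * n)))⁻¹ =
      ka ^ a * kb ^ (4 * n + 2 * b) := by
  rw [map_mul, map_zpow, hx, map_kb_zpow_two_mul hy]
  calc _ = ka ^ m * (kb ^ (2 * n) * ka ^ a) * kb ^ (2 * (b + n)) * ka ^ (-m) := by group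
    _ = ka ^ m * ka ^ a * (kb ^ (2 * (b + 2 * n)) * ka ^ (-m)) := by
      rw [(commute_kb_zpow_two_mul_ka_zpow n a).eq]; group
    _ = ka ^ m * ka ^ a * (ka ^ (-m) * kb ^ (2 * (b + 2 * n))) := by
      rw [(commute_kb_zpow_two_mul_ka_zpow _ _).eq]
    _ = _ := by group

theorem kb_twist_ka_zpow (hy : φ kb = ka ^ r * kb⁻¹) (i : ℤ) :
    kb * ka ^ i * (φ kb)⁻¹ = ka ^ (-r - i) * kb ^ (2 : ℤ) := by
  calc kb * ka ^ i * (φ kb)⁻¹ = kb * ka ^ i * kb * ka ^ (-r) := by rw [hy]; group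
    _ = ka ^ (-i) * (kb ^ (2 : ℤ) * ka ^ (-r)) := by
      rw [kb_mul_ka_zpow, zpow_two]; group
    _ = _ := by rw [(commute_kb_zpow_two_ka.zpow_right (-r)).eq]; group

theorem twistedConj_ka_zpow_iff (hx : φ ka = ka) (hy : φ kb = ka ^ r * kb⁻¹) (i : ℤ)
    (g : KleinGroup) :
    twistedConj φ (ka ^ i) g ↔
      ∃ n : ℤ, g = ka ^ i * kb ^ (4 * n) ∨ g = ka ^ (-r - i) * kb ^ (4 * n + 2) := by
  have twist_even (m n : ℤ) :
      ka ^ m * kb ^ (2 * n) * ka ^ i * (φ (ka ^ m * kb ^ (2 * n)))⁻¹ =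
        ka ^ i * kb ^ (4 * n) := by
    simpa using ka_zpow_mul_kb_zpow_two_mul_twist hx hy m n i 0
  have twist_odd (m n : ℤ) :
      ka ^ m * kb ^ (2 * n + 1) * ka ^ i * (φ (ka ^ m * kb ^ (2 * n + 1)))⁻¹ =
        ka ^ (-r - i) * kb ^ (4 * n + 2) := by
    rw [zpow_add_one, ← mul_assoc, mul_mul_map_mul_inv, kb_twist_ka_zpow hy]
    simpa using ka_zpow_mul_kb_zpow_two_mul_twist hx hy m n (-r - i) 1
  constructor
  · rintro ⟨σ, rfl⟩
    obtain ⟨m, k, rfl⟩ := exists_eq_ka_zpow_mul_kb_zpow σ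
    obtain ⟨n, rfl | rfl⟩ := Int.even_or_odd' k
    · exact ⟨n, .inl (twist_even m n)⟩
    · exact ⟨n, .inr (twist_odd m n)⟩
  · rintro ⟨n, rfl | rfl⟩
    · exact ⟨kb ^ (2 * n), by simpa using (twist_even 0 n).symm⟩
    · exact ⟨kb ^ (2 * n + 1), by simpa using (twist_odd 0 n).symm⟩

theorem twistedConj_ka_zpow_ka_zpow_iff (hx : φ ka = ka) (hy : φ kb = ka ^ r * kb⁻¹)
    (i j : ℤ) : twistedConj φ (ka ^ i) (ka ^ j) ↔ i = j := by
  refine ⟨fun h => ?_, fun h => h ▸ (twistedConj_equivalence φ).refl _⟩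
  have kb_exponent_eq_zero {a k : ℤ} (h : ka ^ j = ka ^ a * kb ^ k) : k = 0 := by
    have hdeg := congrArg kbDegree h
    rw [← mul_one (ka ^ j), ← zpow_zero kb, kbDegree_ka_zpow_mul_kb_zpow,
      kbDegree_ka_zpow_mul_kb_zpow] at hdeg
    exact (Multiplicative.ofAdd.injective hdeg).symm
  obtain ⟨n, h | h⟩ := (twistedConj_ka_zpow_iff hx hy i _).1 h
  · obtain rfl : n = 0 := by have := kb_exponent_eq_zero h; omega
    rw [mul_zero, zpow_zero, mul_one] at h
    exact (ka_zpow_injective h).symm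
  · have := kb_exponent_eq_zero h
    omega

end Twist

end KleinGroup

/-- For the automorphism `x ↦ x`, `y ↦ x^r y⁻¹` of the Klein bottle group, the
twisted conjugacy class of `x^i` consists exactly of the elements `x^i y^{4n}` and
`x^{-r-i} y^{4n+2}`; hence `x^i ∼ x^j` iff `i = j`, and `R(φ) = ∞`. -/
theorem stmt10 (r : ℤ) (φ : MulAut KleinGroup)
    (hx : φ ka = ka) (hy : φ kb = ka ^ r * kb⁻¹) :
    (∀ i : ℤ, {g : KleinGroup | twistedConj φ.toMonoidHom (ka ^ i) g} =
      {g : KleinGroup | ∃ n : ℤ,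
        g = ka ^ i * kb ^ (4 * n) ∨ g = ka ^ (-r - i) * kb ^ (4 * n + 2)}) ∧
    (∀ i j : ℤ, twistedConj φ.toMonoidHom (ka ^ i) (ka ^ j) ↔ i = j) ∧
    Infinite (Quot (twistedConj φ.toMonoidHom)) := by
  have hclass (i : ℤ) := KleinGroup.twistedConj_ka_zpow_iff (φ := φ.toMonoidHom) hx hy i
  have hpow := KleinGroup.twistedConj_ka_zpow_ka_zpow_iff (φ := φ.toMonoidHom) hx hy
  refine ⟨fun i => Set.ext (hclass i), hpow, ?_⟩
  refine Infinite.of_injective (fun i : ℤ => Quot.mk _ (ka ^ i)) fun i j hij => ?_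
  exact (hpow i j).1 ((twistedConj_equivalence _).eqvGen_iff.1 (Quot.eq.1 hij))
end
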